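/- arXiv:2311.16729 — 4 statements merged into one kernel-verified Lean document; each statement's English description precedes it below -/
import Mathlib

section
/- Let V be a real inner product space of dimension 3, let A : V → V be a self-adjoint (symmetric) linear map with trace zero, and let w ∈ V satisfy ‖w‖² = 2. Writing ‖A‖² := tr(A∘A) for the squared Frobenius norm of A and A(w)^⊥ := A w − (⟨A w, w⟩/2)·w for the component of A w orthogonal to w, one has ‖A‖² − ‖A(w)^⊥‖² ≥ (3/8)·⟨A w, w⟩². (This is the pointwise linear-algebra content of LeBrun's Lemma applied to W₊ acting on Λ⁺ with w = ω.) -/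
/-!
Complete `u = w / √2` to an orthonormal basis `u = b₀, b₁, …, bₙ`. In `tr(A∘A) = ∑ᵢ ‖A bᵢ‖²`
each off-diagonal entry `⟪A u, bⱼ⟫` is counted twice, once in `‖A u‖²` and once in `‖A bⱼ‖²`,
which accounts for `2‖(A u)^⊥‖²` and leaves at least `⟪A u, u⟫² + ∑ⱼ ⟪A bⱼ, bⱼ⟫²`. As `A` is
trace free, the diagonal entries `⟪A bⱼ, bⱼ⟫` sum to `-⟪A u, u⟫`, so by Cauchy–Schwarz their
squares sum to at least `⟪A u, u⟫² / n`. For `n = 2` this is `(3/2)⟪A u, u⟫²`, i.e. the claim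
after rescaling `w = √2 u`.
-/

open scoped RealInnerProductSpace

section

open Finset LinearMap

variable {V : Type*} [NormedAddCommGroup V] [InnerProductSpace ℝ V]

theorem norm_sub_inner_smul_sq_of_norm_eq_one {u : V} (hu : ‖u‖ = 1) (x : V) :
    ‖x - ⟪x, u⟫ • u‖ ^ 2 = ‖x‖ ^ 2 - ⟪x, u⟫ ^ 2 := by
  rw [norm_sub_sq_real, real_inner_smul_right, norm_smul, hu, Real.norm_eq_abs]
  ring_nf
  rw [sq_abs]
  ring

theorem OrthonormalBasis.inner_sq_add_inner_sq_le_norm_sq {ι : Type*} [Fintype ι]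
    (b : OrthonormalBasis ι ℝ V) {i j : ι} (hij : i ≠ j) (x : V) :
    ⟪b i, x⟫ ^ 2 + ⟪b j, x⟫ ^ 2 ≤ ‖x‖ ^ 2 := by
  classical
  rw [← b.sum_sq_inner_right, ← sum_pair (f := fun k => ⟪b k, x⟫ ^ 2) hij]
  exact sum_le_univ_sum_of_nonneg fun _ => sq_nonneg _

theorem exists_orthonormalBasis_apply_zero_eq [FiniteDimensional ℝ V] {n : ℕ}
    (hdim : Module.finrank ℝ V = n + 1) {u : V} (hu : ‖u‖ = 1) :
    ∃ b : OrthonormalBasis (Fin (n + 1)) ℝ V, b 0 = u := by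
  have hu' : Orthonormal ℝ (({0} : Set (Fin (n + 1))).domRestrict fun _ => u) := by
    rw [orthonormal_iff_ite]
    rintro ⟨i, rfl⟩ ⟨j, rfl⟩
    simp [hu]
  obtain ⟨b, hb⟩ := hu'.exists_orthonormalBasis_extension_of_card_eq (by simpa using hdim)
  exact ⟨b, hb 0 rfl⟩

namespace LinearMap.IsSymmetric

variable {A : V →ₗ[ℝ] V}

theorem trace_comp_self_eq_sum_norm_sq {ι : Type*} [Fintype ι] (hA : A.IsSymmetric)
    (b : OrthonormalBasis ι ℝ V) :
    trace ℝ V (A ∘ₗ A) = ∑ i, ‖A (b i)‖ ^ 2 := by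
  rw [trace_eq_sum_inner _ b]
  congr! 1 with i
  rw [comp_apply, ← hA, real_inner_self_eq_norm_sq]

theorem le_trace_comp_self_sub_two_mul_norm_sq {n : ℕ} (hA : A.IsSymmetric)
    (htr : trace ℝ V A = 0) (b : OrthonormalBasis (Fin (n + 1)) ℝ V) :
    (n + 1) * ⟪A (b 0), b 0⟫ ^ 2 ≤
      n * (trace ℝ V (A ∘ₗ A) - 2 * ‖A (b 0) - ⟪A (b 0), b 0⟫ • b 0‖ ^ 2) := by
  set u := b 0
  set lam := ⟪A u, u⟫
  set d : Fin n → ℝ := fun j => ⟪b j.succ, A (b j.succ)⟫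
  have hpyth : ‖A u - lam • u‖ ^ 2 = ‖A u‖ ^ 2 - lam ^ 2 :=
    norm_sub_inner_smul_sq_of_norm_eq_one (b.norm_eq_one 0) (A u)
  have hperp : ‖A u - lam • u‖ ^ 2 = ∑ j : Fin n, ⟪b j.succ, A u⟫ ^ 2 := by
    rw [hpyth, ← b.sum_sq_inner_right, Fin.sum_univ_succ, real_inner_comm]
    ring
  have hdiag : lam + ∑ j, d j = 0 := by
    rwa [trace_eq_sum_inner A b, Fin.sum_univ_succ, real_inner_comm] at htr
  have hrows : ‖A u‖ ^ 2 + ‖A u - lam • u‖ ^ 2 + ∑ j, d j ^ 2 ≤ trace ℝ V (A ∘ₗ A) := by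
    rw [hA.trace_comp_self_eq_sum_norm_sq b, Fin.sum_univ_succ, hperp, add_assoc,
      ← sum_add_distrib]
    gcongr with j
    rw [real_inner_comm, hA]
    exact b.inner_sq_add_inner_sq_le_norm_sq (Fin.succ_ne_zero j).symm _
  have hcs : lam ^ 2 ≤ n * ∑ j, d j ^ 2 := by
    simpa [eq_neg_of_add_eq_zero_left hdiag] using sq_sum_le_card_mul_sum_sq (s := univ) (f := d)
  calc (n + 1) * lam ^ 2 ≤ n * lam ^ 2 + n * ∑ j, d j ^ 2 := by linarith
    _ = n * (lam ^ 2 + ∑ j, d j ^ 2) := by ring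
    _ ≤ _ := by gcongr; linarith

theorem le_trace_comp_self_sub_two_mul_norm_sq_of_norm_eq_one [FiniteDimensional ℝ V] {n : ℕ}
    (hdim : Module.finrank ℝ V = n + 1) (hA : A.IsSymmetric) (htr : trace ℝ V A = 0) {u : V}
    (hu : ‖u‖ = 1) :
    (n + 1) * ⟪A u, u⟫ ^ 2 ≤ n * (trace ℝ V (A ∘ₗ A) - 2 * ‖A u - ⟪A u, u⟫ • u‖ ^ 2) := by
  obtain ⟨b, rfl⟩ := exists_orthonormalBasis_apply_zero_eq hdim hu
  exact hA.le_trace_comp_self_sub_two_mul_norm_sq htr b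

end LinearMap.IsSymmetric

end

/-- Pointwise linear-algebra content of LeBrun's Lemma: for a trace-free self-adjoint
endomorphism `A` of a 3-dimensional real inner product space and `w` with `‖w‖² = 2`,
one has `‖A‖² − ‖A(w)^⊥‖² ≥ (3/8)⟨A w, w⟩²`, where `‖A‖² = tr(A∘A)` and
`A(w)^⊥ = A w − (⟨A w, w⟩/2)·w`. -/
theorem lebrun_lemma_pointwise
    {V : Type*} [NormedAddCommGroup V] [InnerProductSpace ℝ V]
    [FiniteDimensional ℝ V] (hdim : Module.finrank ℝ V = 3)
    (A : V →ₗ[ℝ] V) (hA : ∀ x y : V, ⟪A x, y⟫ = ⟪x, A y⟫)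
    (htr : LinearMap.trace ℝ V A = 0)
    (w : V) (hw : ‖w‖ ^ 2 = 2) :
    LinearMap.trace ℝ V (A ∘ₗ A) - ‖A w - (⟪A w, w⟫ / 2) • w‖ ^ 2 ≥
      (3 / 8) * ⟪A w, w⟫ ^ 2 := by
  have hnorm : ‖w‖ = √2 := by rw [← hw, Real.sqrt_sq (norm_nonneg w)]
  have hw0 : w ≠ 0 := by rintro rfl; norm_num at hw
  set u := ‖w‖⁻¹ • w
  have hu : ‖u‖ = 1 := norm_smul_inv_norm hw0
  have hwu : w = √2 • u := by
    rw [smul_smul, ← hnorm, mul_inv_cancel₀ (norm_ne_zero_iff.2 hw0), one_smul]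
  have hquad : ⟪A w, w⟫ = 2 * ⟪A u, u⟫ := by
    rw [hwu, map_smul, real_inner_smul_left, real_inner_smul_right, ← mul_assoc,
      Real.mul_self_sqrt zero_le_two]
  have hperp : ‖A w - (⟪A w, w⟫ / 2) • w‖ ^ 2 = 2 * ‖A u - ⟪A u, u⟫ • u‖ ^ 2 := by
    rw [hquad, hwu, map_smul, mul_div_cancel_left₀ _ two_ne_zero, smul_comm, ← smul_sub,
      norm_smul, mul_pow, Real.norm_eq_abs, sq_abs, Real.sq_sqrt zero_le_two]
  have key := LinearMap.IsSymmetric.le_trace_comp_self_sub_two_mul_norm_sq_of_norm_eq_one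
    (n := 2) hdim hA htr hu
  push_cast at key
  rw [hperp, hquad]
  linarith
end

section
/- Let V be a real inner product space of dimension 3, let A : V → V be a self-adjoint (symmetric) linear map with trace zero, and let w ∈ V satisfy ‖w‖² = 2. Then ‖A‖² − (1/2)·‖A w − (⟨A w, w⟩/2)·w‖² ≥ (3/8)·⟨A w, w⟩², where ‖A‖² := tr(A∘A) is the squared Frobenius norm. (This weakened form of LeBrun's Lemma is the pointwise input to the integral inequality ∫ W₊(ω,ω)(W₊(ω,ω) − s/3) dμ ≤ 0.) -/
/-!
Complete `w / ‖w‖` to an orthonormal basis `b₀, …, bₙ` and let `aᵢⱼ = ⟪bᵢ, A bⱼ⟫`. Then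
`tr(A ∘ A) = ∑ aᵢⱼ²` and `‖A w - (⟪A w, w⟫ / ‖w‖²) w‖² / ‖w‖² = ∑_{i ≠ 0} aᵢ₀²`, so the difference
of the two is at least `a₀₀² + ∑_{i ≠ 0} aᵢᵢ²`. As `A` is traceless, `∑_{i ≠ 0} aᵢᵢ = -a₀₀`, and
Cauchy–Schwarz gives `∑_{i ≠ 0} aᵢᵢ² ≥ a₀₀² / n`.
-/

open scoped RealInnerProductSpace
open Finset

section

variable {V : Type*} [NormedAddCommGroup V] [InnerProductSpace ℝ V]

theorem exists_orthonormalBasis_fin_apply_zero {n : ℕ}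
    (hdim : Module.finrank ℝ V = n + 1) {u : V} (hu : ‖u‖ = 1) :
    ∃ b : OrthonormalBasis (Fin (n + 1)) ℝ V, b 0 = u := by
  have := Module.finite_of_finrank_eq_succ hdim
  have hv : Orthonormal ℝ (({0} : Set (Fin (n + 1))).domRestrict fun _ ↦ u) := by
    refine ⟨fun _ ↦ hu, ?_⟩
    rintro ⟨i, rfl⟩ ⟨j, rfl⟩ hij
    exact absurd rfl hij
  obtain ⟨b, hb⟩ := hv.exists_orthonormalBasis_extension_of_card_eq (by simpa using hdim)
  exact ⟨b, hb 0 rfl⟩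

theorem OrthonormalBasis.norm_sq_sub_inner_smul_apply_zero {n : ℕ}
    (b : OrthonormalBasis (Fin (n + 1)) ℝ V) (x : V) :
    ‖x - ⟪x, b 0⟫ • b 0‖ ^ 2 = ∑ i : Fin n, ⟪b i.succ, x⟫ ^ 2 := by
  rw [← b.sum_sq_inner_right, Fin.sum_univ_succ]
  simp [inner_sub_right, inner_smul_right, b.inner_eq_ite, real_inner_comm]

theorem LinearMap.IsSymmetric.trace_comp_self_eq_sum_sq {ι : Type*} [Fintype ι]
    {A : V →ₗ[ℝ] V} (hA : A.IsSymmetric) (b : OrthonormalBasis ι ℝ V) :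
    LinearMap.trace ℝ V (A ∘ₗ A) = ∑ i, ∑ j, ⟪b j, A (b i)⟫ ^ 2 := by
  rw [LinearMap.trace_eq_sum_inner _ b]
  refine sum_congr rfl fun i _ ↦ ?_
  rw [LinearMap.comp_apply, ← hA, b.sum_sq_inner_right, real_inner_self_eq_norm_sq]

theorem LinearMap.IsSymmetric.sq_inner_apply_zero_le {n : ℕ} {A : V →ₗ[ℝ] V}
    (hA : A.IsSymmetric) (htr : LinearMap.trace ℝ V A = 0)
    (b : OrthonormalBasis (Fin (n + 1)) ℝ V) :
    ((n + 1) / n : ℝ) * ⟪A (b 0), b 0⟫ ^ 2 ≤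
      LinearMap.trace ℝ V (A ∘ₗ A) - ‖A (b 0) - ⟪A (b 0), b 0⟫ • b 0‖ ^ 2 := by
  set c := ⟪A (b 0), b 0⟫
  set d : Fin n → ℝ := fun i ↦ ⟪b i.succ, A (b i.succ)⟫
  have hd : ∑ i, d i = -c := by
    have := htr
    rw [LinearMap.trace_eq_sum_inner _ b, Fin.sum_univ_succ, real_inner_comm] at this
    linarith
  have hcs : c ^ 2 ≤ n * ∑ i, d i ^ 2 := by
    simpa [hd] using sq_sum_le_card_mul_sum_sq (s := univ) (f := d)
  have hdiag : ∑ i, d i ^ 2 ≤ ∑ i : Fin n, ∑ j : Fin n, ⟪b j.succ, A (b i.succ)⟫ ^ 2 :=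
    sum_le_sum fun i _ ↦ single_le_sum (f := fun j ↦ ⟪b j.succ, A (b i.succ)⟫ ^ 2)
      (fun _ _ ↦ sq_nonneg _) (mem_univ i)
  have hrow : 0 ≤ ∑ i : Fin n, ⟪b 0, A (b i.succ)⟫ ^ 2 := sum_nonneg fun _ _ ↦ sq_nonneg _
  rw [hA.trace_comp_self_eq_sum_sq b, b.norm_sq_sub_inner_smul_apply_zero]
  simp only [Fin.sum_univ_succ, sum_add_distrib, ← real_inner_comm (b 0) (A (b 0))]
  rcases n.eq_zero_or_pos with rfl | hn
  · simpa using sq_nonneg c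
  · have hn' : (0 : ℝ) < n := by exact_mod_cast hn
    have hsplit : ((n + 1) / n : ℝ) * c ^ 2 = c ^ 2 + c ^ 2 / n := by field_simp
    have : c ^ 2 / n ≤ ∑ i, d i ^ 2 := by rw [div_le_iff₀ hn']; linarith
    linarith

theorem LinearMap.IsSymmetric.sq_inner_div_norm_sq_le {n : ℕ}
    (hdim : Module.finrank ℝ V = n + 1) {A : V →ₗ[ℝ] V} (hA : A.IsSymmetric)
    (htr : LinearMap.trace ℝ V A = 0) {w : V} (hw : w ≠ 0) :
    ((n + 1) / n : ℝ) * (⟪A w, w⟫ / ‖w‖ ^ 2) ^ 2 ≤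
      LinearMap.trace ℝ V (A ∘ₗ A) - ‖A w - (⟪A w, w⟫ / ‖w‖ ^ 2) • w‖ ^ 2 / ‖w‖ ^ 2 := by
  have hr : ‖w‖ ≠ 0 := norm_ne_zero_iff.mpr hw
  have hunit : ‖‖w‖⁻¹ • w‖ = 1 := by rw [norm_smul, norm_inv, norm_norm, inv_mul_cancel₀ hr]
  obtain ⟨b, hb⟩ := exists_orthonormalBasis_fin_apply_zero hdim hunit
  have hwb : w = ‖w‖ • b 0 := by rw [hb, smul_inv_smul₀ hr]
  have key := hA.sq_inner_apply_zero_le htr b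
  set r := ‖w‖
  set u := b 0
  have hinner : ⟪A w, w⟫ / r ^ 2 = ⟪A u, u⟫ := by
    rw [hwb, map_smul, real_inner_smul_left, real_inner_smul_right]
    field_simp
  have hperp : A w - ⟪A u, u⟫ • w = r • (A u - ⟪A u, u⟫ • u) := by
    rw [hwb, map_smul, smul_sub, smul_comm r ⟪A u, u⟫]
  rwa [hinner, hperp, norm_smul, mul_pow, Real.norm_eq_abs, sq_abs,
    mul_div_cancel_left₀ _ (pow_ne_zero 2 hr)]

end

theorem lebrun_lemma_weak_pointwise_general
    {V : Type*} [NormedAddCommGroup V] [InnerProductSpace ℝ V]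
    (hdim : Module.finrank ℝ V = 3)
    (A : V →ₗ[ℝ] V) (hA : ∀ x y : V, ⟪A x, y⟫ = ⟪x, A y⟫)
    (htr : LinearMap.trace ℝ V A = 0)
    (w : V) (hw : ‖w‖ ^ 2 = 2) :
    LinearMap.trace ℝ V (A ∘ₗ A) - (1 / 2) * ‖A w - (⟪A w, w⟫ / 2) • w‖ ^ 2 ≥
      (3 / 8) * ⟪A w, w⟫ ^ 2 := by
  have hw0 : w ≠ 0 := by
    rintro rfl
    norm_num at hw
  have key := LinearMap.IsSymmetric.sq_inner_div_norm_sq_le (n := 2) hdim hA htr hw0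
  rw [hw] at key
  norm_num at key ⊢
  linarith

/-- Weakened pointwise form of LeBrun's Lemma:
`‖A‖² − (1/2)‖A(w)^⊥‖² ≥ (3/8)⟨A w, w⟩²`. -/
theorem lebrun_lemma_weak_pointwise
    {V : Type*} [NormedAddCommGroup V] [InnerProductSpace ℝ V]
    [FiniteDimensional ℝ V] (hdim : Module.finrank ℝ V = 3)
    (A : V →ₗ[ℝ] V) (hA : ∀ x y : V, ⟪A x, y⟫ = ⟪x, A y⟫)
    (htr : LinearMap.trace ℝ V A = 0)
    (w : V) (hw : ‖w‖ ^ 2 = 2) :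
    LinearMap.trace ℝ V (A ∘ₗ A) - (1 / 2) * ‖A w - (⟪A w, w⟫ / 2) • w‖ ^ 2 ≥
      (3 / 8) * ⟪A w, w⟫ ^ 2 :=
  lebrun_lemma_weak_pointwise_general hdim A hA htr w hw
end

section
/- Let (M, μ) be a measure space and let s, t, w, p : M → ℝ be measurable functions such that s², t², s·t, (t − s)², w and p are integrable. Assume (i) ∫ s·(t/2 − s/6) dμ = ∫ (8·w − 4·p) dμ, and (ii) w − p ≥ (3/8)·(t/2 − s/6)² pointwise (μ-almost everywhere). Then ∫ s²/24 dμ − ∫ w dμ ≥ (3/32)·∫ (t − s)² dμ ≥ 0. (Abstract form of Theorem 3: with s the scalar curvature, t = s* the star scalar curvature, w = |W₊|², p = |W₊(ω)^⊥|², this yields ∫ s²/24 dμ ≥ ∫ |W₊|² dμ for compact almost-Kähler four-manifolds with δW₊ = 0.) -/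
open MeasureTheory

/-! With `q = t/2 − s/6` one has the pointwise identity
`s²/24 − w − (3/32)(t − s)² = ¼ (s q − (8w − 4p)) + (w − p − (3/8) q²)`.
Integrating, the first term vanishes by (i) and the second is nonnegative by (ii). -/

section QuadraticIntegrable

variable {M : Type*} [MeasurableSpace M] {μ : Measure M} {s t f : M → ℝ}

theorem integrable_of_eq_quadraticForm (hs2 : Integrable (fun x => s x ^ 2) μ)
    (hst : Integrable (fun x => s x * t x) μ) (ht2 : Integrable (fun x => t x ^ 2) μ)
    (a b c : ℝ) (hf : ∀ x, f x = a * s x ^ 2 + b * (s x * t x) + c * t x ^ 2) :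
    Integrable f μ := by
  rw [funext hf]
  exact ((hs2.const_mul a).add (hst.const_mul b)).add (ht2.const_mul c)

end QuadraticIntegrable

theorem theorem3_abstract_general
    {M : Type*} [MeasurableSpace M] (μ : Measure M)
    (s t w p : M → ℝ)
    (hs2 : Integrable (fun x => s x ^ 2) μ)
    (ht2 : Integrable (fun x => t x ^ 2) μ)
    (hst : Integrable (fun x => s x * t x) μ)
    (hwi : Integrable w μ) (hpi : Integrable p μ)
    (h1 : ∫ x, s x * (t x / 2 - s x / 6) ∂μ = ∫ x, (8 * w x - 4 * p x) ∂μ)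
    (h2 : ∀ᵐ x ∂μ, w x - p x ≥ (3 / 8) * (t x / 2 - s x / 6) ^ 2) :
    (∫ x, s x ^ 2 / 24 ∂μ) - (∫ x, w x ∂μ) ≥ (3 / 32) * ∫ x, (t x - s x) ^ 2 ∂μ ∧
      (3 / 32) * ∫ x, (t x - s x) ^ 2 ∂μ ≥ 0 := by
  have hs2_div : Integrable (fun x => s x ^ 2 / 24) μ :=
    integrable_of_eq_quadraticForm hs2 hst ht2 (1 / 24) 0 0 fun x => by ring
  have hd2 : Integrable (fun x => (t x - s x) ^ 2) μ :=
    integrable_of_eq_quadraticForm hs2 hst ht2 1 (-2) 1 fun x => by ring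
  have hsq : Integrable (fun x => s x * (t x / 2 - s x / 6)) μ :=
    integrable_of_eq_quadraticForm hs2 hst ht2 (-1 / 6) (1 / 2) 0 fun x => by ring
  have hq2 : Integrable (fun x => (t x / 2 - s x / 6) ^ 2) μ :=
    integrable_of_eq_quadraticForm hs2 hst ht2 (1 / 36) (-1 / 6) (1 / 4) fun x => by ring
  have hwp : Integrable (fun x => 8 * w x - 4 * p x) μ :=
    (hwi.const_mul 8).sub (hpi.const_mul 4)
  have hdefect : Integrable (fun x => w x - p x - 3 / 8 * (t x / 2 - s x / 6) ^ 2) μ :=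
    (hwi.sub hpi).sub (hq2.const_mul _)
  have hdefect_nonneg : 0 ≤ ∫ x, (w x - p x - 3 / 8 * (t x / 2 - s x / 6) ^ 2) ∂μ :=
    integral_nonneg_of_ae (h2.mono fun x hx => sub_nonneg.2 hx)
  have key :=
    calc (∫ x, s x ^ 2 / 24 ∂μ) - (∫ x, w x ∂μ) - (3 / 32) * ∫ x, (t x - s x) ^ 2 ∂μ
        = ∫ x, (s x ^ 2 / 24 - w x - 3 / 32 * (t x - s x) ^ 2) ∂μ := by
          rw [integral_sub (hs2_div.sub' hwi) (hd2.const_mul _), integral_sub hs2_div hwi,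
            integral_const_mul]
      _ = ∫ x, (1 / 4 * (s x * (t x / 2 - s x / 6) - (8 * w x - 4 * p x))
            + (w x - p x - 3 / 8 * (t x / 2 - s x / 6) ^ 2)) ∂μ :=
          integral_congr_ae (ae_of_all _ fun x => by ring)
      _ = ∫ x, (w x - p x - 3 / 8 * (t x / 2 - s x / 6) ^ 2) ∂μ := by
          rw [integral_add ((hsq.sub' hwp).const_mul _) hdefect, integral_const_mul,
            integral_sub hsq hwp, h1, sub_self, mul_zero, zero_add]
  have hd2_nonneg : 0 ≤ ∫ x, (t x - s x) ^ 2 ∂μ := integral_nonneg fun x => sq_nonneg _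
  exact ⟨by linarith, by positivity⟩

/-- Abstract form of Theorem 3: if `∫ s(t/2 − s/6) = ∫ (8w − 4p)` and pointwise
`w − p ≥ (3/8)(t/2 − s/6)²`, then `∫ s²/24 − ∫ w ≥ (3/32) ∫ (t − s)² ≥ 0`. -/
theorem theorem3_abstract
    {M : Type*} [MeasurableSpace M] (μ : Measure M)
    (s t w p : M → ℝ)
    (hs : Measurable s) (ht : Measurable t) (hw : Measurable w) (hp : Measurable p)
    (hs2 : Integrable (fun x => s x ^ 2) μ)
    (ht2 : Integrable (fun x => t x ^ 2) μ)
    (hst : Integrable (fun x => s x * t x) μ)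
    (hts2 : Integrable (fun x => (t x - s x) ^ 2) μ)
    (hwi : Integrable w μ) (hpi : Integrable p μ)
    (h1 : ∫ x, s x * (t x / 2 - s x / 6) ∂μ = ∫ x, (8 * w x - 4 * p x) ∂μ)
    (h2 : ∀ᵐ x ∂μ, w x - p x ≥ (3 / 8) * (t x / 2 - s x / 6) ^ 2) :
    (∫ x, s x ^ 2 / 24 ∂μ) - (∫ x, w x ∂μ) ≥ (3 / 32) * ∫ x, (t x - s x) ^ 2 ∂μ ∧
      (3 / 32) * ∫ x, (t x - s x) ^ 2 ∂μ ≥ 0 :=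
  theorem3_abstract_general μ s t w p hs2 ht2 hst hwi hpi h1 h2
end

section
/- Let (M, μ) be a measure space and let s, t, w, p : M → ℝ be measurable functions such that s², t², s·t, (t − s)², w and p are integrable. Assume (i) ∫ s·(t/2 − s/6) dμ = ∫ (8·w − 4·p) dμ, (ii) w − p ≥ (3/8)·(t/2 − s/6)² pointwise (μ-almost everywhere), and (iii) ∫ s²/24 dμ = ∫ w dμ. Then t = s μ-almost everywhere. (Abstract form of the equality case of Theorem 3: equality ∫ s²/24 dμ = ∫ |W₊|² dμ forces s* ≡ s, i.e., the almost-Kähler structure is Kähler with constant scalar curvature.) -/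
/-!
Write `q = t/2 - s/6`. Pointwise, `(3/32)(t - s)² = (3/8) q² - (s q/4 - s²/24)`, so (ii) gives
`(3/32)(t - s)² ≤ (w - p) - (s q/4 - s²/24)`, while (i) and (iii) say precisely that the right-hand
side has integral zero. A nonnegative function dominated by a function of integral zero vanishes
almost everywhere.
-/

open MeasureTheory

theorem ae_eq_zero_of_nonneg_of_le_of_integral_nonpos {α : Type*} [MeasurableSpace α]
    {μ : Measure α} {f g : α → ℝ} (hf : 0 ≤ᵐ[μ] f) (hfg : f ≤ᵐ[μ] g) (hg : Integrable g μ)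
    (hg0 : ∫ x, g x ∂μ ≤ 0) : f =ᵐ[μ] 0 := by
  have hg_nonneg : 0 ≤ᵐ[μ] g := hf.trans hfg
  have hg_zero : g =ᵐ[μ] 0 :=
    (integral_eq_zero_iff_of_nonneg_ae hg_nonneg hg).mp
      (le_antisymm hg0 (integral_nonneg_of_ae hg_nonneg))
  filter_upwards [hf, hfg, hg_zero] with x hfx hfgx hgx
  exact le_antisymm (hfgx.trans_eq hgx) hfx

theorem mul_sq_sub_le_of_mul_sq_le (s t a : ℝ) (h : 3 / 8 * (t / 2 - s / 6) ^ 2 ≤ a) :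
    3 / 32 * (t - s) ^ 2 ≤ a - (s * (t / 2 - s / 6) / 4 - s ^ 2 / 24) := by
  linarith [show 3 / 32 * (t - s) ^ 2
    = 3 / 8 * (t / 2 - s / 6) ^ 2 - (s * (t / 2 - s / 6) / 4 - s ^ 2 / 24) by ring]

theorem theorem3_equality_case_abstract_general
    {M : Type*} [MeasurableSpace M] (μ : Measure M)
    (s t w p : M → ℝ)
    (hs2 : Integrable (fun x => s x ^ 2) μ)
    (hst : Integrable (fun x => s x * t x) μ)
    (hwi : Integrable w μ) (hpi : Integrable p μ)
    (h1 : ∫ x, s x * (t x / 2 - s x / 6) ∂μ = ∫ x, (8 * w x - 4 * p x) ∂μ)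
    (h2 : ∀ᵐ x ∂μ, w x - p x ≥ (3 / 8) * (t x / 2 - s x / 6) ^ 2)
    (h3 : ∫ x, s x ^ 2 / 24 ∂μ = ∫ x, w x ∂μ) :
    t =ᵐ[μ] s := by
  have hsq : Integrable (fun x => s x * (t x / 2 - s x / 6)) μ :=
    ((hst.div_const 2).sub (hs2.div_const 6)).congr (.of_forall fun x => by simp only [Pi.sub_apply]; ring)
  have hcross : Integrable (fun x => s x * (t x / 2 - s x / 6) / 4 - s x ^ 2 / 24) μ :=
    (hsq.div_const 4).sub (hs2.div_const 24)
  have hwp : Integrable (fun x => w x - p x) μ := hwi.sub hpi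
  have h1' : ∫ x, s x * (t x / 2 - s x / 6) ∂μ = 8 * ∫ x, w x ∂μ - 4 * ∫ x, p x ∂μ := by
    rw [h1, integral_sub (hwi.const_mul 8) (hpi.const_mul 4), integral_const_mul,
      integral_const_mul]
  have hdefect : ∫ x, (w x - p x) - (s x * (t x / 2 - s x / 6) / 4 - s x ^ 2 / 24) ∂μ = 0 := by
    rw [integral_sub hwp hcross, integral_sub hwi hpi,
      integral_sub (hsq.div_const 4) (hs2.div_const 24), integral_div, h1', h3]
    ring
  have hzero : (fun x => 3 / 32 * (t x - s x) ^ 2) =ᵐ[μ] 0 :=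
    ae_eq_zero_of_nonneg_of_le_of_integral_nonpos (.of_forall fun x => by positivity)
      (h2.mono fun x hx => mul_sq_sub_le_of_mul_sq_le (s x) (t x) _ hx) (hwp.sub hcross) hdefect.le
  filter_upwards [hzero] with x hx
  have : (t x - s x) ^ 2 = 0 := by simpa using hx
  exact sub_eq_zero.mp (pow_eq_zero_iff two_ne_zero |>.mp this)

/-- Abstract form of the equality case of Theorem 3: under the hypotheses of Theorem 3,
equality `∫ s²/24 = ∫ w` forces `t = s` a.e. -/
theorem theorem3_equality_case_abstract
    {M : Type*} [MeasurableSpace M] (μ : Measure M)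
    (s t w p : M → ℝ)
    (hs : Measurable s) (ht : Measurable t) (hw : Measurable w) (hp : Measurable p)
    (hs2 : Integrable (fun x => s x ^ 2) μ)
    (ht2 : Integrable (fun x => t x ^ 2) μ)
    (hst : Integrable (fun x => s x * t x) μ)
    (hts2 : Integrable (fun x => (t x - s x) ^ 2) μ)
    (hwi : Integrable w μ) (hpi : Integrable p μ)
    (h1 : ∫ x, s x * (t x / 2 - s x / 6) ∂μ = ∫ x, (8 * w x - 4 * p x) ∂μ)
    (h2 : ∀ᵐ x ∂μ, w x - p x ≥ (3 / 8) * (t x / 2 - s x / 6) ^ 2)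
    (h3 : ∫ x, s x ^ 2 / 24 ∂μ = ∫ x, w x ∂μ) :
    t =ᵐ[μ] s :=
  theorem3_equality_case_abstract_general μ s t w p hs2 hst hwi hpi h1 h2 h3
end
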